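/- Let I be a monomial ideal in R = k[x_1,…,x_n] generated by the monomials with exponent vectors in a finite set G. If I has a maximal corner, then |G| ≥ n, i.e. any monomial generating set of an ideal possessing a maximal corner has at least n elements. -/
import Mathlib


open MvPolynomial

/-- The monomial `X^ν = ∏ i, x_i ^ ν i` in `k[x_1, …, x_n]`. -/
noncomputable def Xpow (k : Type) [Field k] (n : ℕ) (ν : Fin n → ℕ) :
    MvPolynomial (Fin n) k :=
  ∏ i, X i ^ ν i

/-- The lowered multidegree: subtract one from every entry (truncated at 0). -/
def low {n : ℕ} (μ : Fin n → ℕ) : Fin n → ℕ := fun i => μ i - 1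

/-- The irreducible monomial ideal `m^μ = ⟨x_i^{μ_i} : μ_i ≠ 0⟩`. -/
noncomputable def mIdeal (k : Type) [Field k] (n : ℕ) (μ : Fin n → ℕ) :
    Ideal (MvPolynomial (Fin n) k) :=
  Ideal.span ((fun i => (X i : MvPolynomial (Fin n) k) ^ μ i) '' {i | μ i ≠ 0})

/-- A monomial ideal: an ideal generated by a set of monomials. -/
def IsMonomialIdeal {k : Type} [Field k] {n : ℕ}
    (I : Ideal (MvPolynomial (Fin n) k)) : Prop :=
  ∃ S : Set (Fin n → ℕ), I = Ideal.span (Xpow k n '' S)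

/-- `μ` is a maximal corner of `I`: `μ` has full support, `x_i · X^{low μ} ∈ I`
for every `i`, and `X^{low μ} ∉ I`. -/
def IsMaximalCorner {k : Type} [Field k] {n : ℕ}
    (I : Ideal (MvPolynomial (Fin n) k)) (μ : Fin n → ℕ) : Prop :=
  (∀ i, μ i ≠ 0) ∧
    (∀ i, (X i : MvPolynomial (Fin n) k) * Xpow k n (low μ) ∈ I) ∧
    Xpow k n (low μ) ∉ I

lemma Xpow_eq_monomial (k : Type) [Field k] (n : ℕ) (ν : Fin n → ℕ) :
    Xpow k n ν = monomial (Finsupp.equivFunOnFinite.symm ν) (1 : k) := by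
  rw [monomial_eq, C_1, one_mul, Finsupp.prod_fintype]
  · rfl
  · intro i; exact pow_zero _

lemma mem_span_Xpow (k : Type) [Field k] (n : ℕ) (G : Finset (Fin n → ℕ))
    (c : Fin n → ℕ) :
    Xpow k n c ∈ Ideal.span (Xpow k n '' (G : Set (Fin n → ℕ))) ↔
      ∃ ν ∈ G, ∀ j, ν j ≤ c j := by
  have him : Xpow k n '' (G : Set (Fin n → ℕ)) =
      (fun s => monomial s (1:k)) '' (Finsupp.equivFunOnFinite.symm '' (G : Set (Fin n → ℕ))) := by
    rw [Set.image_image]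
    exact Set.image_congr fun ν _ => Xpow_eq_monomial k n ν
  rw [Xpow_eq_monomial, him, mem_ideal_span_monomial_image]
  have hsupp : (monomial (Finsupp.equivFunOnFinite.symm c) (1:k)).support
      = {Finsupp.equivFunOnFinite.symm c} := by
    classical
    rw [support_monomial, if_neg one_ne_zero]
  rw [hsupp]
  simp only [Finset.mem_singleton, forall_eq, Set.mem_image, Finset.mem_coe]
  constructor
  · rintro ⟨si, ⟨ν, hν, rfl⟩, hle⟩
    exact ⟨ν, hν, fun j => hle j⟩
  · rintro ⟨ν, hν, hle⟩
    refine ⟨Finsupp.equivFunOnFinite.symm ν, ⟨ν, hν, rfl⟩, fun j => hle j⟩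

lemma X_mul_Xpow (k : Type) [Field k] (n : ℕ) (c : Fin n → ℕ) (i : Fin n) :
    (X i : MvPolynomial (Fin n) k) * Xpow k n c
      = Xpow k n (fun j => c j + if j = i then 1 else 0) := by
  unfold Xpow
  have key : ∀ j : Fin n, (X j : MvPolynomial (Fin n) k) ^ (c j + if j = i then 1 else 0)
      = X j ^ c j * (if j = i then X j else 1) := by
    intro j
    by_cases hj : j = i <;> simp [hj, pow_succ]
  symm
  calc ∏ j, (X j : MvPolynomial (Fin n) k) ^ (c j + if j = i then 1 else 0)
      = ∏ j, ((X j : MvPolynomial (Fin n) k) ^ c j * (if j = i then X j else 1)) :=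
        Finset.prod_congr rfl fun j _ => key j
    _ = (∏ j, (X j : MvPolynomial (Fin n) k) ^ c j) * ∏ j, (if j = i then X j else 1) :=
        Finset.prod_mul_distrib
    _ = (∏ j, (X j : MvPolynomial (Fin n) k) ^ c j) * X i := by
        rw [Finset.prod_ite_eq' Finset.univ i (fun j => (X j : MvPolynomial (Fin n) k))]
        simp
    _ = X i * ∏ j, (X j : MvPolynomial (Fin n) k) ^ c j := mul_comm _ _

/-- A monomial ideal possessing a maximal corner needs at least
`n` monomial generators. -/
theorem stmt11 (k : Type) [Field k] (n : ℕ) (G : Finset (Fin n → ℕ))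
    (I : Ideal (MvPolynomial (Fin n) k))
    (hI : I = Ideal.span (Xpow k n '' (G : Set (Fin n → ℕ))))
    (hcorner : ∃ μ : Fin n → ℕ, IsMaximalCorner I μ) :
    n ≤ G.card := by
  obtain ⟨μ, hfull, hmem, hnot⟩ := hcorner
  subst hI
  have hnot' : ¬ ∃ ν ∈ G, ∀ j, ν j ≤ low μ j := by
    intro h
    exact hnot ((mem_span_Xpow k n G _).mpr h)
  have key : ∀ i : Fin n, ∃ ν ∈ G,
      (∀ j, ν j ≤ low μ j + if j = i then 1 else 0) := by
    intro i
    have h := hmem i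
    rw [X_mul_Xpow, mem_span_Xpow] at h
    exact h
  choose f hfG hfle using key
  have hfi : ∀ i, ¬ (∀ j, f i j ≤ low μ j) := fun i h => hnot' ⟨f i, hfG i, h⟩
  have hinj : Function.Injective f := by
    intro i j hij
    by_contra hne
    apply hfi i
    intro m
    by_cases hm : m = i
    · subst hm
      have h1 := hfle j m
      rw [← hij] at h1
      simpa [hne] using h1
    · have h1 := hfle i m
      simpa [hm] using h1
  calc n = (Finset.univ : Finset (Fin n)).card := by simp
    _ ≤ G.card := Finset.card_le_card_of_injOn f (fun i _ => hfG i) (hinj.injOn)
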